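/- Let N = 8n with n ≥ 1 and let x = (1 2)···(4n−1 4n), y = (1 4n+1)···(4n 8n) ∈ S_N. Then every element of the coset y·Z_{S_N}(x) of the centralizer of x in the symmetric group S_N has even order. -/

import Mathlib

/-!
A permutation `z` commuting with `x` preserves the support `A = {1, …, 4n}` of `x`, while `y`
exchanges `A` with its complement. Hence every `w = y z` exchanges `A` with its complement, so
`w ^ k` sends a point of `A` back into `A` only for even `k`; in particular for `k = orderOf w`.
-/

namespace Equiv.Perm

variable {α : Type*}

theorem pow_apply_mem_iff_of_apply_mem_iff_notMem {w : Perm α} {s : Set α}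
    (hw : ∀ a, w a ∈ s ↔ a ∉ s) (k : ℕ) (a : α) : (w ^ k) a ∈ s ↔ (Even k ↔ a ∈ s) := by
  induction k generalizing a with
  | zero => simp
  | succ k ih =>
    rw [pow_succ, mul_apply, ih, hw, Nat.even_add_one]
    tauto

theorem even_orderOf_of_apply_mem_iff_notMem [Nonempty α] {w : Perm α} {s : Set α}
    (hw : ∀ a, w a ∈ s ↔ a ∉ s) : Even (orderOf w) := by
  obtain ⟨a⟩ := ‹Nonempty α›
  have h := pow_apply_mem_iff_of_apply_mem_iff_notMem hw (orderOf w) a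
  rw [pow_orderOf_eq_one, one_apply] at h
  tauto

end Equiv.Perm

open Equiv.Perm in
/-- With `N = 8n` (`n ≥ 1`), `x = (1 2)⋯(4n-1 4n)` and `y = (1 4n+1)⋯(4n 8n)`,
every element of the coset `y ⬝ Z_{S_N}(x)` of the centralizer of `x` in the symmetric group
has even order. -/
theorem stmt19 (n : ℕ) (hn : 1 ≤ n) (x y : Equiv.Perm (Fin (8 * n)))
    (hx : ∀ i : Fin (8 * n), ((x i : Fin (8 * n)) : ℕ) =
      if (i : ℕ) < 4 * n then (if (i : ℕ) % 2 = 0 then (i : ℕ) + 1 else (i : ℕ) - 1)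
      else (i : ℕ))
    (hy : ∀ i : Fin (8 * n),
      ((y i : Fin (8 * n)) : ℕ) = if (i : ℕ) < 4 * n then (i : ℕ) + 4 * n else (i : ℕ) - 4 * n) :
    ∀ z : Equiv.Perm (Fin (8 * n)), z * x = x * z → Even (orderOf (y * z)) := by
  intro z hz
  have hx_support : ∀ i, i ∈ x.support ↔ (i : ℕ) < 4 * n := fun i => by
    rw [mem_support, ne_eq, ← Fin.val_inj, hx i]
    split_ifs <;> omega
  have hy_swap : ∀ i, y i ∈ x.support ↔ i ∉ x.support := fun i => by
    rw [hx_support, hx_support, hy i]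
    split_ifs <;> omega
  have : Nonempty (Fin (8 * n)) := ⟨⟨0, by omega⟩⟩
  refine even_orderOf_of_apply_mem_iff_notMem (s := x.support) fun i => ?_
  simp only [Finset.mem_coe, mul_apply, hy_swap, mem_support_iff_of_commute hz]
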